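/- arXiv:1607.08899 — 2 statements merged into one kernel-verified Lean document; each statement's English description precedes it below -/
import Mathlib

section
/- Let X be a geodesic metric space and γ₁, γ₂ : [0,∞) → X be N-Morse geodesic rays with γ₁(0) = γ₂(0) = e. Let x₁ = γ₁(v₁), x₂ = γ₂(v₂), and let γ be a geodesic from x₁ to x₂. Then the geodesic triangle γ₁([0,v₁]) ∪ γ ∪ γ₂([0,v₂]) is 4·N(3,0)-slim, i.e., each side lies in the 4·N(3,0)-neighborhood of the union of the other two sides. -/
open Set Metric Filter

/-- A map is a geodesic on the interval `I`: distances equal parameter differences. -/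
def IsGeodesicOn {X : Type*} [MetricSpace X] (γ : ℝ → X) (I : Set ℝ) : Prop :=
  ∀ s ∈ I, ∀ t ∈ I, dist (γ s) (γ t) = |s - t|

/-- A `(K,C)`-quasigeodesic on the interval `I`. -/
def IsQuasigeodesicOn {X : Type*} [MetricSpace X] (K C : ℝ) (q : ℝ → X) (I : Set ℝ) : Prop :=
  ∀ s ∈ I, ∀ t ∈ I,
    (1 / K) * |s - t| - C ≤ dist (q s) (q t) ∧ dist (q s) (q t) ≤ K * |s - t| + C

/-- The closed `r`-neighborhood of a subset. -/
def nbhd {X : Type*} [MetricSpace X] (A : Set X) (r : ℝ) : Set X :=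
  {x | ∃ y ∈ A, dist x y ≤ r}

/-- A path `γ` (on domain `I`) is `N`-Morse: every `(K,C)`-quasigeodesic with endpoints
on `γ` lies in the `N K C`-neighborhood of `γ`. -/
def IsMorseOn {X : Type*} [MetricSpace X] (N : ℝ → ℝ → ℝ) (γ : ℝ → X) (I : Set ℝ) : Prop :=
  ∀ K C : ℝ, 1 ≤ K → 0 ≤ C → ∀ (q : ℝ → X) (a b : ℝ), a ≤ b →
    IsQuasigeodesicOn K C q (Icc a b) → q a ∈ γ '' I → q b ∈ γ '' I →
    q '' Icc a b ⊆ nbhd (γ '' I) (N K C)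

/-- A Morse gauge takes nonnegative values. -/
def MorseGauge (N : ℝ → ℝ → ℝ) : Prop := ∀ K C : ℝ, 1 ≤ K → 0 ≤ C → 0 ≤ N K C

/-- A geodesic metric space: any two points are joined by a geodesic. -/
def GeodesicSpace (X : Type*) [MetricSpace X] : Prop :=
  ∀ x y : X, ∃ γ : ℝ → X, IsGeodesicOn γ (Icc 0 (dist x y)) ∧ γ 0 = x ∧ γ (dist x y) = y


/-!
Let `p = γ t₀` be a point of the side `γ` closest to `e`, and `σ` a geodesic from `e` to `p`.
Since `γ` stays at distance at least `|σ| = d(e, p)` from `e`, following `σ` and then either half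
of `γ` is a `(3,0)`-quasigeodesic from `e` to `xᵢ`, so the Morse property of `γᵢ` puts it in the
`δ`-neighborhood of the ray `γᵢ`, where `δ = N(3,0)`. Comparing distances to `e` (with the
intermediate value theorem along the paths) upgrades this to mutual `2δ`-closeness of
`γᵢ([0,vᵢ])` and `σ ∪ (half of γ)`. Passing through `σ` costs another `2δ`, whence `4δ`.
-/

section Concat

variable {α : Type*} {σ g : ℝ → α} {ρ M s : ℝ}

noncomputable def concatAt (σ g : ℝ → α) (ρ : ℝ) : ℝ → α :=
  fun s => if s ≤ ρ then σ s else g (s - ρ)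

lemma concatAt_of_le (hs : s ≤ ρ) : concatAt σ g ρ s = σ s := if_pos hs

lemma concatAt_of_lt (hs : ρ < s) : concatAt σ g ρ s = g (s - ρ) := if_neg hs.not_ge

lemma concatAt_add (hlink : σ ρ = g 0) {u : ℝ} (hu : 0 ≤ u) :
    concatAt σ g ρ (ρ + u) = g u := by
  rcases hu.eq_or_lt with rfl | hu
  · rw [add_zero, concatAt_of_le le_rfl, hlink]
  · rw [concatAt_of_lt (by linarith), add_sub_cancel_left]

lemma image_concatAt (hlink : σ ρ = g 0) (hρ : 0 ≤ ρ) (hM : 0 ≤ M) :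
    concatAt σ g ρ '' Icc 0 (ρ + M) = σ '' Icc 0 ρ ∪ g '' Icc 0 M := by
  ext x
  constructor
  · rintro ⟨s, hs, rfl⟩
    rcases le_or_gt s ρ with hsρ | hρs
    · exact Or.inl ⟨s, ⟨hs.1, hsρ⟩, (concatAt_of_le hsρ).symm⟩
    · exact Or.inr ⟨s - ρ, ⟨by linarith, by linarith [hs.2]⟩, (concatAt_of_lt hρs).symm⟩
  · rintro (⟨s, hs, rfl⟩ | ⟨u, hu, rfl⟩)
    · exact ⟨s, ⟨hs.1, by linarith [hs.2]⟩, concatAt_of_le hs.2⟩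
    · exact ⟨ρ + u, ⟨by linarith [hu.1], by linarith [hu.2]⟩, concatAt_add hlink hu.1⟩

end Concat

section Development

variable {X : Type*} [MetricSpace X]

section Nbhd

variable {A B C B' C' : Set X} {r s : ℝ}

lemma subset_nbhd (hr : 0 ≤ r) : A ⊆ nbhd A r :=
  fun x hx => ⟨x, hx, by rwa [dist_self]⟩

lemma nbhd_mono (hAB : A ⊆ B) (hrs : r ≤ s) : nbhd A r ⊆ nbhd B s :=
  fun _ ⟨y, hy, hxy⟩ => ⟨y, hAB hy, hxy.trans hrs⟩

lemma subset_nbhd_trans (hAB : A ⊆ nbhd B r) (hBC : B ⊆ nbhd C s) : A ⊆ nbhd C (r + s) := by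
  intro x hx
  obtain ⟨y, hy, hxy⟩ := hAB hx
  obtain ⟨z, hz, hyz⟩ := hBC hy
  exact ⟨z, hz, (dist_triangle x y z).trans (add_le_add hxy hyz)⟩

lemma union_subset_nbhd_union (hB : B ⊆ nbhd B' r) (hC : C ⊆ C') (hr : 0 ≤ r) :
    B ∪ C ⊆ nbhd (B' ∪ C') r :=
  union_subset (hB.trans (nbhd_mono subset_union_left le_rfl))
    ((hC.trans subset_union_right).trans (subset_nbhd hr))

end Nbhd

namespace IsQuasigeodesicOn

variable {K C : ℝ} {q : ℝ → X} {I : Set ℝ}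

lemma of_le (h : ∀ s ∈ I, ∀ t ∈ I, s ≤ t →
      (1 / K) * (t - s) - C ≤ dist (q s) (q t) ∧ dist (q s) (q t) ≤ K * (t - s) + C) :
    IsQuasigeodesicOn K C q I := by
  intro s hs t ht
  rcases le_total s t with hst | hts
  · rw [abs_sub_comm, abs_of_nonneg (sub_nonneg.2 hst)]
    exact h s hs t ht hst
  · rw [abs_of_nonneg (sub_nonneg.2 hts), dist_comm]
    exact h t ht s hs hts

lemma continuousOn (hq : IsQuasigeodesicOn K 0 q I) : ContinuousOn q I := by
  refine (LipschitzOnWith.of_dist_le_mul (K := K.toNNReal) fun s hs t ht => ?_).continuousOn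
  rw [Real.dist_eq]
  calc dist (q s) (q t) ≤ K * |s - t| + 0 := (hq s hs t ht).2
    _ ≤ K.toNNReal * |s - t| := by
      rw [add_zero]; exact mul_le_mul_of_nonneg_right (Real.le_coe_toNNReal K) (abs_nonneg _)

end IsQuasigeodesicOn

namespace IsGeodesicOn

variable {γ : ℝ → X} {I J : Set ℝ} {L : ℝ}

lemma comp (hγ : IsGeodesicOn γ I) {f : ℝ → ℝ} (hf : Isometry f) (hfJ : MapsTo f J I) :
    IsGeodesicOn (γ ∘ f) J := fun s hs t ht => by
  rw [Function.comp_apply, Function.comp_apply, hγ _ (hfJ hs) _ (hfJ ht), ← Real.dist_eq,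
    hf.dist_eq, Real.dist_eq]

lemma dist_of_le (hγ : IsGeodesicOn γ I) {s t : ℝ} (hs : s ∈ I) (ht : t ∈ I) (hst : s ≤ t) :
    dist (γ s) (γ t) = t - s := by
  rw [hγ s hs t ht, abs_sub_comm, abs_of_nonneg (sub_nonneg.2 hst)]

lemma isQuasigeodesicOn (hγ : IsGeodesicOn γ I) : IsQuasigeodesicOn 1 0 γ I :=
  fun s hs t ht => by simp [hγ s hs t ht]

lemma continuousOn (hγ : IsGeodesicOn γ I) : ContinuousOn γ I :=
  hγ.isQuasigeodesicOn.continuousOn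

lemma comp_const_sub (hγ : IsGeodesicOn γ (Icc 0 L)) {t₀ : ℝ} (ht₀ : t₀ ≤ L) :
    IsGeodesicOn (γ ∘ (t₀ - ·)) (Icc 0 t₀) :=
  hγ.comp (IsometryEquiv.subLeft t₀).isometry
    fun u hu => ⟨by linarith [hu.2], by linarith [hu.1]⟩

lemma comp_const_add (hγ : IsGeodesicOn γ (Icc 0 L)) {t₀ : ℝ} (ht₀ : 0 ≤ t₀) :
    IsGeodesicOn (γ ∘ (t₀ + ·)) (Icc 0 (L - t₀)) :=
  hγ.comp (isometry_add_left t₀) fun u hu => ⟨by linarith [hu.1], by linarith [hu.2]⟩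

variable {x : X} {δ v : ℝ}

lemma dist_zero_apply (hγ : IsGeodesicOn γ (Ici 0)) {w : ℝ} (hw : 0 ≤ w) :
    dist (γ 0) (γ w) = w := by
  rw [hγ.dist_of_le self_mem_Ici hw hw, sub_zero]

lemma dist_apply_dist_le (hγ : IsGeodesicOn γ (Ici 0)) (hx : x ∈ nbhd (γ '' Ici 0) δ) :
    dist x (γ (dist (γ 0) x)) ≤ 2 * δ := by
  obtain ⟨_, ⟨w, hw, rfl⟩, hxw⟩ := hx
  have hw' : |w - dist (γ 0) x| ≤ δ := by
    have := abs_dist_sub_le (γ w) x (γ 0)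
    rw [dist_comm (γ w), hγ.dist_zero_apply hw, dist_comm (γ w), dist_comm x (γ 0)] at this
    linarith
  calc dist x (γ (dist (γ 0) x)) ≤ dist x (γ w) + dist (γ w) (γ (dist (γ 0) x)) :=
        dist_triangle _ _ _
    _ = dist x (γ w) + |w - dist (γ 0) x| := by rw [hγ w hw _ dist_nonneg]
    _ ≤ 2 * δ := by linarith

lemma mem_nbhd_image_Icc (hγ : IsGeodesicOn γ (Ici 0)) (hx : x ∈ nbhd (γ '' Ici 0) δ)
    (hxv : dist (γ 0) x ≤ v) : x ∈ nbhd (γ '' Icc 0 v) (2 * δ) := by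
  obtain ⟨_, ⟨w, hw, rfl⟩, hxw⟩ := hx
  have hv : 0 ≤ v := dist_nonneg.trans hxv
  have hwv : w ≤ v + δ := by
    have := dist_triangle (γ 0) x (γ w)
    rw [hγ.dist_zero_apply hw] at this
    linarith
  have hmin : min w v ∈ Icc 0 v := ⟨le_min hw hv, min_le_right w v⟩
  refine ⟨γ (min w v), mem_image_of_mem γ hmin, ?_⟩
  calc dist x (γ (min w v)) ≤ dist x (γ w) + dist (γ w) (γ (min w v)) := dist_triangle _ _ _
    _ = dist x (γ w) + (w - min w v) := by
      rw [dist_comm (γ w), hγ.dist_of_le hmin.1 hw (min_le_left w v)]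
    _ ≤ 2 * δ := by
      have := dist_nonneg (x := x) (y := γ w)
      rcases min_cases w v with ⟨h, -⟩ | ⟨h, -⟩ <;> rw [h] <;> linarith

lemma image_Icc_subset_nbhd_of_continuousOn (hγ : IsGeodesicOn γ (Ici 0)) {c : ℝ → X} {T : ℝ}
    (hT : 0 ≤ T) (hc : ContinuousOn c (Icc 0 T)) (hc0 : c 0 = γ 0) (hcT : c T = γ v)
    (hcN : c '' Icc 0 T ⊆ nbhd (γ '' Ici 0) δ) :
    γ '' Icc 0 v ⊆ nbhd (c '' Icc 0 T) (2 * δ) := by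
  rintro _ ⟨u, hu, rfl⟩
  have hdist : ContinuousOn (fun s => dist (γ 0) (c s)) (Icc 0 T) :=
    (continuous_const.dist continuous_id).comp_continuousOn hc
  obtain ⟨s, hs, hsu⟩ := intermediate_value_Icc hT hdist
    (show u ∈ Icc (dist (γ 0) (c 0)) (dist (γ 0) (c T)) by
      rwa [hc0, hcT, dist_self, hγ.dist_zero_apply (hu.1.trans hu.2)])
  refine ⟨c s, mem_image_of_mem c hs, ?_⟩
  rw [dist_comm, ← hsu]
  exact hγ.dist_apply_dist_le (hcN (mem_image_of_mem c hs))

lemma image_subset_nbhd_image_Icc (hγ : IsGeodesicOn γ (Ici 0)) {g : ℝ → X} {a b : ℝ}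
    (hg : IsGeodesicOn g (Icc a b)) (hgb : g b = γ v) (hga : dist (γ 0) (g a) ≤ v)
    (hgN : g '' Icc a b ⊆ nbhd (γ '' Ici 0) δ) :
    g '' Icc a b ⊆ nbhd (γ '' Icc 0 v) (2 * δ) := by
  rintro _ ⟨t, ht, rfl⟩
  by_cases hnear : dist (γ 0) (g t) ≤ v
  · exact hγ.mem_nbhd_image_Icc (hgN (mem_image_of_mem g ht)) hnear
  -- Otherwise `g` crosses the sphere of radius `v` about `γ 0` at some `t' ≤ t`; there it is
  -- `2δ`-close to `γ v = g b`, and `g t` lies even closer to `g b`.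
  have hdist : ContinuousOn (fun s => dist (γ 0) (g s)) (Icc a t) :=
    (continuous_const.dist continuous_id).comp_continuousOn
      (hg.continuousOn.mono (Icc_subset_Icc_right ht.2))
  obtain ⟨t', ht', ht'v⟩ := intermediate_value_Icc ht.1 hdist ⟨hga, (not_le.1 hnear).le⟩
  have ht'ab : t' ∈ Icc a b := ⟨ht'.1, ht'.2.trans ht.2⟩
  have hb : b ∈ Icc a b := right_mem_Icc.2 (ht.1.trans ht.2)
  have hclose : dist (g t') (γ v) ≤ 2 * δ :=
    ht'v ▸ hγ.dist_apply_dist_le (hgN (mem_image_of_mem g ht'ab))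
  refine ⟨γ v, mem_image_of_mem γ ⟨dist_nonneg.trans hga, le_rfl⟩, ?_⟩
  calc dist (g t) (γ v) = b - t := by rw [← hgb, hg.dist_of_le ht hb ht.2]
    _ ≤ b - t' := by linarith [ht'.2]
    _ = dist (g t') (γ v) := by rw [← hgb, hg.dist_of_le ht'ab hb ht'ab.2]
    _ ≤ 2 * δ := hclose

end IsGeodesicOn

lemma isQuasigeodesicOn_concatAt {σ g : ℝ → X} {ρ M : ℝ}
    (hσ : IsGeodesicOn σ (Icc 0 ρ)) (hg : IsGeodesicOn g (Icc 0 M))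
    (hlink : σ ρ = g 0) (hfar : ∀ u ∈ Icc 0 M, ρ ≤ dist (σ 0) (g u)) :
    IsQuasigeodesicOn 3 0 (concatAt σ g ρ) (Icc 0 (ρ + M)) := by
  refine IsQuasigeodesicOn.of_le fun s hs t ht hst => ?_
  rcases le_or_gt t ρ with htρ | hρt
  · rw [concatAt_of_le (hst.trans htρ), concatAt_of_le htρ,
      hσ.dist_of_le ⟨hs.1, hst.trans htρ⟩ ⟨ht.1, htρ⟩ hst]
    constructor <;> linarith
  have htM : t - ρ ∈ Icc 0 M := ⟨by linarith, by linarith [ht.2]⟩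
  rw [concatAt_of_lt hρt]
  rcases le_or_gt s ρ with hsρ | hρs
  · rw [concatAt_of_le hsρ]
    have hρ : 0 ≤ ρ := hs.1.trans hsρ
    have hsg : dist (σ s) (g 0) = ρ - s := hlink ▸ hσ.dist_of_le ⟨hs.1, hsρ⟩ ⟨hρ, le_rfl⟩ hsρ
    have hg0 : dist (g 0) (g (t - ρ)) = t - ρ - 0 :=
      hg.dist_of_le ⟨le_rfl, by linarith [htM.2]⟩ htM htM.1
    have hσs : dist (σ 0) (σ s) = s - 0 := hσ.dist_of_le ⟨le_rfl, hρ⟩ ⟨hs.1, hsρ⟩ hs.1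
    have hfar_t := hfar (t - ρ) htM
    have h₁ := dist_triangle (σ s) (g 0) (g (t - ρ))
    have h₂ := dist_triangle (σ 0) (σ s) (g (t - ρ))
    have h₃ := dist_triangle (g 0) (σ s) (g (t - ρ))
    rw [dist_comm (g 0) (σ s)] at h₃
    -- The distance `d` is at least `ρ - s` and at least `(t - ρ) - (ρ - s)`, so `3 d ≥ t - s`.
    constructor <;> linarith
  · rw [concatAt_of_lt hρs, hg.dist_of_le ⟨by linarith, by linarith [hs.2]⟩ htM (by linarith)]
    constructor <;> linarith

theorem IsMorseOn.concatAt_fellowTravel {N : ℝ → ℝ → ℝ} {γ σ g : ℝ → X} {ρ M v : ℝ}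
    (hγ : IsGeodesicOn γ (Ici 0)) (hMorse : IsMorseOn N γ (Ici 0)) (hv : 0 ≤ v)
    (hσ : IsGeodesicOn σ (Icc 0 ρ)) (hg : IsGeodesicOn g (Icc 0 M)) (hρ : 0 ≤ ρ) (hM : 0 ≤ M)
    (hσ0 : σ 0 = γ 0) (hlink : σ ρ = g 0) (hgM : g M = γ v)
    (hfar : ∀ u ∈ Icc 0 M, ρ ≤ dist (γ 0) (g u)) :
    σ '' Icc 0 ρ ⊆ nbhd (γ '' Icc 0 v) (2 * N 3 0) ∧
    g '' Icc 0 M ⊆ nbhd (γ '' Icc 0 v) (2 * N 3 0) ∧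
    γ '' Icc 0 v ⊆ nbhd (σ '' Icc 0 ρ ∪ g '' Icc 0 M) (2 * N 3 0) := by
  have hq := isQuasigeodesicOn_concatAt hσ hg hlink (hσ0 ▸ hfar)
  have hc0 : concatAt σ g ρ 0 = γ 0 := (concatAt_of_le hρ).trans hσ0
  have hcT : concatAt σ g ρ (ρ + M) = γ v := (concatAt_add hlink hM).trans hgM
  have himage := image_concatAt hlink hρ hM
  have hnear : σ '' Icc 0 ρ ∪ g '' Icc 0 M ⊆ nbhd (γ '' Ici 0) (N 3 0) :=
    himage ▸ hMorse 3 0 (by norm_num) le_rfl _ 0 (ρ + M) (by linarith) hq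
      ⟨0, self_mem_Ici, hc0.symm⟩ ⟨v, hv, hcT.symm⟩
  have hρv : ρ ≤ v := by simpa [hgM, hγ.dist_zero_apply hv] using hfar M ⟨hM, le_rfl⟩
  refine ⟨?_, ?_, ?_⟩
  · rintro _ ⟨s, hs, rfl⟩
    refine hγ.mem_nbhd_image_Icc (hnear (Or.inl (mem_image_of_mem σ hs))) ?_
    rw [← hσ0, hσ.dist_of_le (left_mem_Icc.2 hρ) hs hs.1]
    linarith [hs.2]
  · refine hγ.image_subset_nbhd_image_Icc hg hgM ?_ (subset_union_right.trans hnear)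
    rw [← hσ0, ← hlink, hσ.dist_of_le (left_mem_Icc.2 hρ) (right_mem_Icc.2 hρ) hρ]
    linarith
  · rw [← himage]
    exact hγ.image_Icc_subset_nbhd_of_continuousOn (by linarith) hq.continuousOn hc0 hcT
      (himage ▸ hnear)

end Development

/-- a triangle with two N-Morse sides emanating from a common point
is 4·N(3,0)-slim. -/
theorem stmt1 {X : Type*} [MetricSpace X] (hX : GeodesicSpace X)
    (N : ℝ → ℝ → ℝ) (hN : MorseGauge N) (e : X)
    (γ₁ γ₂ : ℝ → X)
    (hγ₁ : IsGeodesicOn γ₁ (Ici 0)) (hγ₂ : IsGeodesicOn γ₂ (Ici 0))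
    (hM₁ : IsMorseOn N γ₁ (Ici 0)) (hM₂ : IsMorseOn N γ₂ (Ici 0))
    (h₁0 : γ₁ 0 = e) (h₂0 : γ₂ 0 = e)
    (v₁ v₂ : ℝ) (hv₁ : 0 ≤ v₁) (hv₂ : 0 ≤ v₂)
    (γ : ℝ → X) (L : ℝ) (hL : L = dist (γ₁ v₁) (γ₂ v₂))
    (hγ : IsGeodesicOn γ (Icc 0 L)) (hγa : γ 0 = γ₁ v₁) (hγb : γ L = γ₂ v₂) :
    γ₁ '' Icc 0 v₁ ⊆ nbhd (γ₂ '' Icc 0 v₂ ∪ γ '' Icc 0 L) (4 * N 3 0) ∧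
    γ₂ '' Icc 0 v₂ ⊆ nbhd (γ₁ '' Icc 0 v₁ ∪ γ '' Icc 0 L) (4 * N 3 0) ∧
    γ '' Icc 0 L ⊆ nbhd (γ₁ '' Icc 0 v₁ ∪ γ₂ '' Icc 0 v₂) (4 * N 3 0) := by
  have hL0 : 0 ≤ L := hL ▸ dist_nonneg
  have hδ : 0 ≤ 2 * N 3 0 := by linarith [hN 3 0 (by norm_num) le_rfl]
  obtain ⟨t₀, ht₀, hmin⟩ := isCompact_Icc.exists_isMinOn (nonempty_Icc.2 hL0)
    ((continuous_const.dist continuous_id).comp_continuousOn hγ.continuousOn :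
      ContinuousOn (fun t => dist e (γ t)) (Icc 0 L))
  have hmin' : ∀ t ∈ Icc 0 L, dist e (γ t₀) ≤ dist e (γ t) := isMinOn_iff.1 hmin
  obtain ⟨σ, hσ, hσ0, hσ1⟩ := hX e (γ t₀)
  have H₁ := hM₁.concatAt_fellowTravel hγ₁ hv₁ hσ (hγ.comp_const_sub ht₀.2) dist_nonneg ht₀.1
    (hσ0.trans h₁0.symm) (by simp [hσ1]) (by simp [hγa])
    fun u hu => h₁0 ▸ hmin' _ ⟨by linarith [hu.2], by linarith [hu.1, ht₀.2]⟩
  have H₂ := hM₂.concatAt_fellowTravel hγ₂ hv₂ hσ (hγ.comp_const_add ht₀.1) dist_nonneg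
    (sub_nonneg.2 ht₀.2) (hσ0.trans h₂0.symm) (by simp [hσ1]) (by simp [hγb])
    fun u hu => h₂0 ▸ hmin' _ ⟨by linarith [hu.1, ht₀.1], by linarith [hu.2]⟩
  rw [image_comp, image_const_sub_Icc, sub_self, sub_zero] at H₁
  rw [image_comp, image_const_add_Icc, add_zero, add_sub_cancel] at H₂
  have h4 : 4 * N 3 0 = 2 * N 3 0 + 2 * N 3 0 := by ring
  refine ⟨?_, ?_, ?_⟩
  · rw [h4]
    exact subset_nbhd_trans H₁.2.2
      (union_subset_nbhd_union H₂.1 (image_mono (f := γ) (Icc_subset_Icc_right ht₀.2)) hδ)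
  · rw [h4]
    exact subset_nbhd_trans H₂.2.2
      (union_subset_nbhd_union H₁.1 (image_mono (f := γ) (Icc_subset_Icc_left ht₀.1)) hδ)
  · rw [← Icc_union_Icc_eq_Icc ht₀.1 ht₀.2, image_union]
    exact union_subset (H₁.2.1.trans (nbhd_mono subset_union_left (by linarith)))
      (H₂.2.1.trans (nbhd_mono subset_union_right (by linarith)))
end

section
/- Let X be a proper geodesic metric space with basepoint e, and let K ⊆ ∂_M X_e be a nonempty compact subset of the Morse boundary (with the direct limit topology). Then there exists a single Morse gauge N such that K ⊆ ∂_M^N X_e, i.e., every point of K is represented by an N-Morse geodesic ray based at e. -/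
/-!
Within one stratum, asymptotic rays are uniformly close: a geodesic ray asymptotic to an
`M`-Morse ray with the same origin stays within `2 M(3,0)` of it. To see this, join the ray to
a far point `p` of the Morse ray by a geodesic from a nearest point to `p`; the concatenation
is a `(3,0)`-quasigeodesic with endpoints on the Morse ray. Hence the fibres of each stratum
map are closed, every ray whose class lies in the `M`-stratum is Morse with a gauge depending
only on `M`, and a set meeting each stratum in finitely many points is closed in the direct
limit topology. If for some `(k, c)` the `(k, c)`-Morse constants of the points of `K` were
unbounded, points of `K` with constants above `j = 0, 1, 2, …` would form an infinite set
meeting each stratum finitely often: an infinite closed discrete subset of the compact `K`.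
-/

open Set Metric Filter

/-- A Morse geodesic ray from `e`. -/
def MorseRay {X : Type*} [MetricSpace X] (e : X) (γ : ℝ → X) : Prop :=
  IsGeodesicOn γ (Ici 0) ∧ γ 0 = e ∧ ∃ N : ℝ → ℝ → ℝ, IsMorseOn N γ (Ici 0)

/-- Asymptotic equivalence of Morse rays from `e` (finite Hausdorff distance). -/
def asympSetoid {X : Type*} [MetricSpace X] (e : X) :
    Setoid {γ : ℝ → X // MorseRay e γ} where
  r a b := Metric.hausdorffEDist (a.1 '' Ici 0) (b.1 '' Ici 0) ≠ ⊤
  iseqv := by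
    refine ⟨?_, ?_, ?_⟩
    · intro a
      rw [Metric.hausdorffEDist_self]
      exact ENNReal.zero_ne_top
    · intro a b h
      rwa [Metric.hausdorffEDist_comm]
    · intro a b c hab hbc htop
      have h := Metric.hausdorffEDist_triangle (s := a.1 '' Ici 0)
        (t := b.1 '' Ici 0) (u := c.1 '' Ici 0)
      rw [htop] at h
      exact absurd (lt_of_le_of_lt h (ENNReal.add_lt_top.mpr ⟨hab.lt_top, hbc.lt_top⟩))
        (lt_irrefl ⊤)

/-- The Morse boundary: Morse rays from `e` up to asymptotic equivalence. -/
def MorseBoundary {X : Type*} [MetricSpace X] (e : X) := Quotient (asympSetoid e)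

/-- The N-Morse stratum: geodesic rays from `e` which are N-Morse, topologized by
(induced) pointwise convergence, which on geodesic rays agrees with the compact-open
topology (uniform convergence on compact sets). -/
def stratumRays (X : Type*) [MetricSpace X] (e : X) (N : ℝ → ℝ → ℝ) :=
  {γ : ℝ → X // IsGeodesicOn γ (Ici 0) ∧ γ 0 = e ∧ IsMorseOn N γ (Ici 0)}

instance {X : Type*} [MetricSpace X] (e : X) (N : ℝ → ℝ → ℝ) :
    TopologicalSpace (stratumRays X e N) :=
  TopologicalSpace.induced (fun γ => (γ.1 : ℝ → X)) Pi.topologicalSpace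

/-- The natural map from the N-stratum of rays to the Morse boundary. -/
def strMap {X : Type*} [MetricSpace X] (e : X) (N : ℝ → ℝ → ℝ)
    (γ : stratumRays X e N) : MorseBoundary e :=
  Quotient.mk (asympSetoid e) ⟨γ.1, γ.2.1, γ.2.2.1, N, γ.2.2.2⟩

/-- The direct limit topology on the Morse boundary: a set is open iff its preimage in
every stratum is open. -/
instance {X : Type*} [MetricSpace X] (e : X) : TopologicalSpace (MorseBoundary e) :=
  ⨆ N : ℝ → ℝ → ℝ, TopologicalSpace.coinduced (strMap e N) inferInstance

lemma IsCompact.finite_of_forall_subset_isClosed {Y : Type*} [TopologicalSpace Y] {A : Set Y}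
    (hA : IsCompact A) (h : ∀ S ⊆ A, IsClosed S) : A.Finite :=
  hA.finite <| isDiscrete_iff_discreteTopology.2 <| discreteTopology_iff_forall_isClosed.2
    fun S => isClosed_induced_iff.2
      ⟨(↑) '' S, h _ (Subtype.coe_image_subset A S), preimage_image_eq S Subtype.coe_injective⟩

section MorseRays

variable {X : Type*} [MetricSpace X]

lemma IsGeodesicOn.dist_zero_left {γ : ℝ → X} (hγ : IsGeodesicOn γ (Ici 0)) {s : ℝ}
    (hs : 0 ≤ s) : dist (γ 0) (γ s) = s := by
  rw [hγ 0 self_mem_Ici s hs, zero_sub, abs_neg, abs_of_nonneg hs]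

lemma IsGeodesicOn.exists_forall_dist_le {γ : ℝ → X} (hγ : IsGeodesicOn γ (Ici 0)) (p : X) :
    ∃ s, 0 ≤ s ∧ ∀ u, 0 ≤ u → dist p (γ s) ≤ dist p (γ u) := by
  set T := dist (γ 0) p
  have hlip : LipschitzOnWith 1 γ (Icc 0 (2 * T + 1)) := by
    intro x hx y hy
    rw [edist_dist, hγ x hx.1 y hy.1, ENNReal.coe_one, one_mul, edist_dist, Real.dist_eq]
  obtain ⟨s, hs, hmin⟩ := isCompact_Icc.exists_isMinOn ⟨0, le_rfl, by positivity⟩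
    ((continuous_const.dist continuous_id).comp_continuousOn hlip.continuousOn)
  refine ⟨s, hs.1, fun u hu => ?_⟩
  by_cases hu' : u ≤ 2 * T + 1
  · exact hmin ⟨hu, hu'⟩
  · have h0 : dist p (γ s) ≤ dist p (γ 0) := hmin ⟨le_rfl, by positivity⟩
    have := hγ.dist_zero_left hu
    have := dist_triangle (γ 0) p (γ u)
    rw [dist_comm p (γ 0)] at h0
    linarith

noncomputable def concatPath (γ σ : ℝ → X) (s : ℝ) : ℝ → X :=
  fun u => if u ≤ s then γ u else σ (u - s)

lemma isQuasigeodesicOn_concatPath {γ σ : ℝ → X} {p : X} {s : ℝ}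
    (hγ : IsGeodesicOn γ (Ici 0)) (hs : 0 ≤ s)
    (hnear : ∀ u, 0 ≤ u → dist p (γ s) ≤ dist p (γ u))
    (hσ : IsGeodesicOn σ (Icc 0 (dist (γ s) p))) (hσ0 : σ 0 = γ s)
    (hσp : σ (dist (γ s) p) = p) :
    IsQuasigeodesicOn 3 0 (concatPath γ σ s) (Icc 0 (s + dist (γ s) p)) := by
  set L := dist (γ s) p
  have hL : 0 ≤ L := dist_nonneg
  have hσdist : ∀ w ∈ Icc 0 L, dist (σ w) (γ s) = w ∧ dist (σ w) p = L - w := by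
    intro w hw
    rw [← hσ0, ← hσp, hσ w hw 0 ⟨le_rfl, hL⟩, hσ w hw L ⟨hL, le_rfl⟩, sub_zero,
      abs_of_nonneg hw.1, abs_of_nonpos (by linarith [hw.2]), neg_sub]
    exact ⟨rfl, rfl⟩
  -- the nearest-point property makes the corner at `γ s` cost at most a factor 3
  have hcross : ∀ x ∈ Icc 0 s, ∀ w ∈ Icc 0 L,
      (s - x + w) / 3 ≤ dist (γ x) (σ w) ∧ dist (γ x) (σ w) ≤ s - x + w := by
    intro x hx w hw
    obtain ⟨hσs, hσp'⟩ := hσdist w hw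
    have hγx : dist (γ x) (γ s) = s - x := by
      rw [hγ x hx.1 s hs, abs_of_nonpos (by linarith [hx.2]), neg_sub]
    have h1 : L ≤ dist p (γ x) := (dist_comm (γ s) p).trans_le (hnear x hx.1)
    have h2 := dist_triangle p (σ w) (γ x)
    have h3 := dist_triangle (γ x) (σ w) (γ s)
    have h4 := dist_triangle (γ x) (γ s) (σ w)
    rw [dist_comm p (σ w), dist_comm (σ w) (γ x)] at h2
    rw [dist_comm (γ s) (σ w)] at h4
    constructor
    · rcases le_total (s - x) (2 * w) with h | h <;> linarith
    · linarith
  have hle : ∀ u ∈ Icc 0 (s + L), ∀ v ∈ Icc 0 (s + L), u ≤ v →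
      (v - u) / 3 ≤ dist (concatPath γ σ s u) (concatPath γ σ s v) ∧
        dist (concatPath γ σ s u) (concatPath γ σ s v) ≤ 3 * (v - u) := by
    intro u hu v hv huv
    simp only [concatPath]
    split_ifs with hus hvs hvs
    · rw [hγ u hu.1 v (hu.1.trans huv), abs_of_nonpos (by linarith)]
      constructor <;> linarith
    · obtain ⟨h1, h2⟩ := hcross u ⟨hu.1, hus⟩ (v - s) ⟨by linarith, by linarith [hv.2]⟩
      constructor <;> linarith
    · linarith
    · rw [hσ (u - s) ⟨by linarith, by linarith [hu.2]⟩ (v - s) ⟨by linarith, by linarith [hv.2]⟩,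
        abs_of_nonpos (by linarith)]
      constructor <;> linarith
  intro u hu v hv
  rcases le_total u v with huv | hvu
  · obtain ⟨h1, h2⟩ := hle u hu v hv huv
    rw [abs_of_nonpos (by linarith)]
    constructor <;> linarith
  · obtain ⟨h1, h2⟩ := hle v hv u hu hvu
    rw [dist_comm, abs_of_nonneg (by linarith)]
    constructor <;> linarith

lemma dist_le_two_mul_of_dist_le {γ β : ℝ → X} (hγ : IsGeodesicOn γ (Ici 0))
    (hβ : IsGeodesicOn β (Ici 0)) (h0 : γ 0 = β 0) {t u R : ℝ} (ht : 0 ≤ t) (hu : 0 ≤ u)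
    (h : dist (γ t) (β u) ≤ R) : dist (γ t) (β t) ≤ 2 * R := by
  have h1 : dist (β 0) (β u) = u := hβ.dist_zero_left hu
  have h2 : dist (β 0) (γ t) = t := h0 ▸ hγ.dist_zero_left ht
  have h3 := dist_triangle (β 0) (γ t) (β u)
  have h4 := dist_triangle (β 0) (β u) (γ t)
  have h5 := dist_triangle (γ t) (β u) (β t)
  rw [dist_comm (β u) (γ t)] at h4
  rw [hβ u hu t ht] at h5
  have hut : |u - t| ≤ R := abs_le.2 ⟨by linarith, by linarith⟩
  linarith

lemma IsMorseOn.exists_dist_le_of_hausdorffEDist_ne_top (hX : GeodesicSpace X)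
    {γ β : ℝ → X} {M : ℝ → ℝ → ℝ} (hβM : IsMorseOn M β (Ici 0)) (hγ : IsGeodesicOn γ (Ici 0))
    (hβ : IsGeodesicOn β (Ici 0)) (h0 : γ 0 = β 0)
    (hH : hausdorffEDist (β '' Ici 0) (γ '' Ici 0) ≠ ⊤) {t : ℝ} (ht : 0 ≤ t) :
    ∃ u, 0 ≤ u ∧ dist (γ t) (β u) ≤ M 3 0 := by
  set D := hausdorffDist (β '' Ici 0) (γ '' Ici 0)
  have hD : 0 ≤ D := hausdorffDist_nonneg
  set T := t + D + 2
  have hT : 0 ≤ T := by positivity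
  set p := β T
  obtain ⟨_, ⟨s₁, hs₁, rfl⟩, hps₁⟩ := exists_dist_lt_of_hausdorffDist_lt
    (mem_image_of_mem β (mem_Ici.2 hT)) (lt_add_one D) hH
  obtain ⟨s, hs, hnear⟩ := hγ.exists_forall_dist_le p
  obtain ⟨σ, hσ, hσ0, hσp⟩ := hX (γ s) p
  set L := dist (γ s) p
  have hLD : L < D + 1 := (dist_comm (γ s) p).trans_le (hnear s₁ hs₁) |>.trans_lt hps₁
  have hts : t ≤ s := by
    have := dist_triangle (γ 0) (γ s) p
    rw [hγ.dist_zero_left hs, h0, hβ.dist_zero_left hT] at this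
    linarith
  have hq := isQuasigeodesicOn_concatPath hγ hs hnear hσ hσ0 hσp
  have hq0 : concatPath γ σ s 0 ∈ β '' Ici 0 := by
    rw [concatPath, if_pos hs, h0]
    exact mem_image_of_mem β self_mem_Ici
  have hqL : concatPath γ σ s (s + L) ∈ β '' Ici 0 := by
    have : concatPath γ σ s (s + L) = p := by
      rcases (dist_nonneg : 0 ≤ L).eq_or_lt with hL | hL
      · replace hL : L = 0 := hL.symm
        rw [concatPath, if_pos (by linarith), hL, add_zero, ← hσ0, ← hL, hσp]
      · rw [concatPath, if_neg (by linarith), add_sub_cancel_left, hσp]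
    exact this ▸ mem_image_of_mem β (mem_Ici.2 hT)
  obtain ⟨_, ⟨u, hu, rfl⟩, hdu⟩ := hβM 3 0 (by norm_num) le_rfl _ 0 (s + L) (by positivity)
    hq hq0 hqL (mem_image_of_mem _ ⟨ht, by linarith [dist_nonneg (x := γ s) (y := p)]⟩)
  rw [concatPath, if_pos hts] at hdu
  exact ⟨u, hu, hdu⟩

lemma IsMorseOn.dist_le_of_hausdorffEDist_ne_top (hX : GeodesicSpace X)
    {γ β : ℝ → X} {M : ℝ → ℝ → ℝ} (hβM : IsMorseOn M β (Ici 0)) (hγ : IsGeodesicOn γ (Ici 0))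
    (hβ : IsGeodesicOn β (Ici 0)) (h0 : γ 0 = β 0)
    (hH : hausdorffEDist (β '' Ici 0) (γ '' Ici 0) ≠ ⊤) {t : ℝ} (ht : 0 ≤ t) :
    dist (γ t) (β t) ≤ 2 * M 3 0 := by
  obtain ⟨u, hu, h⟩ := hβM.exists_dist_le_of_hausdorffEDist_ne_top hX hγ hβ h0 hH ht
  exact dist_le_two_mul_of_dist_le hγ hβ h0 ht hu h

lemma hausdorffEDist_image_ne_top_of_dist_le {γ β : ℝ → X} {I : Set ℝ} {R : ℝ}
    (h : ∀ t ∈ I, dist (γ t) (β t) ≤ R) : hausdorffEDist (γ '' I) (β '' I) ≠ ⊤ := by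
  refine ne_top_of_le_ne_top (ENNReal.ofReal_ne_top (r := R))
    (hausdorffEDist_le_of_mem_edist ?_ ?_)
  · rintro _ ⟨t, ht, rfl⟩
    exact ⟨β t, mem_image_of_mem β ht, by rw [edist_dist]; exact ENNReal.ofReal_le_ofReal (h t ht)⟩
  · rintro _ ⟨t, ht, rfl⟩
    exact ⟨γ t, mem_image_of_mem γ ht, by
      rw [edist_dist, dist_comm]; exact ENNReal.ofReal_le_ofReal (h t ht)⟩

lemma IsQuasigeodesicOn.of_dist_le {k c δ : ℝ} {q q' : ℝ → X} {I : Set ℝ}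
    (hq : IsQuasigeodesicOn k c q I) (h : ∀ u, dist (q' u) (q u) ≤ δ) :
    IsQuasigeodesicOn k (c + 2 * δ) q' I := by
  intro s hs t ht
  obtain ⟨hlow, hup⟩ := hq s hs t ht
  have h1 := dist_triangle4 (q' s) (q s) (q t) (q' t)
  have h2 := dist_triangle4 (q s) (q' s) (q' t) (q t)
  rw [dist_comm (q t) (q' t)] at h1
  rw [dist_comm (q s) (q' s)] at h2
  have := h s
  have := h t
  constructor <;> linarith

lemma IsMorseOn.of_dist_le {ρ σ : ℝ → X} {M : ℝ → ℝ → ℝ} {δ : ℝ}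
    (hσM : IsMorseOn M σ (Ici 0)) (hd : ∀ u, 0 ≤ u → dist (ρ u) (σ u) ≤ δ) :
    IsMorseOn (fun k c => M k (c + 2 * δ) + 2 * δ) ρ (Ici 0) := by
  intro k c hk hc q a b hab hq ⟨ta, hta, hqa⟩ ⟨tb, htb, hqb⟩
  have hδ : 0 ≤ δ := dist_nonneg.trans (hd 0 le_rfl)
  classical
  -- move the endpoints of `q` from `ρ` to the nearby points of `σ`
  set q' : ℝ → X := fun u => if u = a then σ ta else if u = b then σ tb else q u
  have hq'q : ∀ u, dist (q' u) (q u) ≤ δ := by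
    intro u
    simp only [q']
    split_ifs with hua hub
    · rw [hua, ← hqa, dist_comm]; exact hd ta hta
    · rw [hub, ← hqb, dist_comm]; exact hd tb htb
    · rw [dist_self]; exact hδ
  have hq'a : q' a ∈ σ '' Ici 0 := by
    simp only [q', if_pos rfl]; exact mem_image_of_mem σ hta
  have hq'b : q' b ∈ σ '' Ici 0 := by
    simp only [q']
    split_ifs
    · exact mem_image_of_mem σ hta
    · exact mem_image_of_mem σ htb
  rintro _ ⟨u, hu, rfl⟩
  obtain ⟨_, ⟨w, hw, rfl⟩, hdw⟩ := hσM k (c + 2 * δ) hk (by linarith) q' a b hab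
    (hq.of_dist_le hq'q) hq'a hq'b (mem_image_of_mem q' hu)
  refine ⟨ρ w, mem_image_of_mem ρ hw, ?_⟩
  have := dist_triangle4 (q u) (q' u) (σ w) (ρ w)
  rw [dist_comm (q u) (q' u), dist_comm (σ w) (ρ w)] at this
  have := hq'q u
  have := hd w hw
  show dist (q u) (ρ w) ≤ M k (c + 2 * δ) + 2 * δ
  linarith

def MorseBoundAt (γ : ℝ → X) (k c B : ℝ) : Prop :=
  ∀ (q : ℝ → X) (a b : ℝ), a ≤ b → IsQuasigeodesicOn k c q (Icc a b) →
    q a ∈ γ '' Ici 0 → q b ∈ γ '' Ici 0 → q '' Icc a b ⊆ nbhd (γ '' Ici 0) B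

lemma MorseBoundAt.mono {γ : ℝ → X} {k c B B' : ℝ} (h : MorseBoundAt γ k c B) (hB : B ≤ B') :
    MorseBoundAt γ k c B' := fun q a b hab hq ha hb _ hx =>
  let ⟨y, hy, hxy⟩ := h q a b hab hq ha hb hx
  ⟨y, hy, hxy.trans hB⟩

lemma IsMorseOn.morseBoundAt {γ : ℝ → X} {N : ℝ → ℝ → ℝ} (h : IsMorseOn N γ (Ici 0))
    {k c : ℝ} (hk : 1 ≤ k) (hc : 0 ≤ c) : MorseBoundAt γ k c (N k c) :=
  h k c hk hc

lemma mem_range_strMap_of_isMorseOn_out {e : X} {x : MorseBoundary e} {M : ℝ → ℝ → ℝ}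
    (hM : IsMorseOn M (Quotient.out x).1 (Ici 0)) : x ∈ range (strMap e M) :=
  ⟨⟨_, (Quotient.out x).2.1, (Quotient.out x).2.2.1, hM⟩, Quotient.out_eq x⟩

lemma isMorseOn_out_of_mem_range_strMap (hX : GeodesicSpace X) {e : X} {x : MorseBoundary e}
    {M : ℝ → ℝ → ℝ} (h : x ∈ range (strMap e M)) :
    IsMorseOn (fun k c => M k (c + 2 * (2 * M 3 0)) + 2 * (2 * M 3 0))
      (Quotient.out x).1 (Ici 0) := by
  obtain ⟨σ, hσ⟩ := h
  have hH : hausdorffEDist (σ.1 '' Ici 0) ((Quotient.out x).1 '' Ici 0) ≠ ⊤ :=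
    Quotient.exact (hσ.trans (Quotient.out_eq x).symm)
  exact σ.2.2.2.of_dist_le fun t ht => σ.2.2.2.dist_le_of_hausdorffEDist_ne_top hX
    (Quotient.out x).2.1 σ.2.1 ((Quotient.out x).2.2.1.trans σ.2.2.1.symm) hH ht

lemma isClosed_strMap_preimage_singleton (hX : GeodesicSpace X) (e : X) (M : ℝ → ℝ → ℝ)
    (y : MorseBoundary e) : IsClosed (strMap e M ⁻¹' {y}) := by
  by_cases hy : y ∈ range (strMap e M)
  · obtain ⟨σ₁, rfl⟩ := hy
    have hfiber : strMap e M ⁻¹' {strMap e M σ₁} =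
        ⋂ u ∈ Ici (0 : ℝ), {σ | dist (σ.1 u) (σ₁.1 u) ≤ 2 * M 3 0} := by
      ext σ
      simp only [mem_iInter₂, mem_ofPred_eq]
      refine ⟨fun h u hu => ?_, fun h => Quotient.sound (hausdorffEDist_image_ne_top_of_dist_le h)⟩
      have hH : hausdorffEDist (σ₁.1 '' Ici 0) (σ.1 '' Ici 0) ≠ ⊤ :=
        Quotient.exact (Set.mem_singleton_iff.1 h).symm
      exact σ₁.2.2.2.dist_le_of_hausdorffEDist_ne_top hX σ.2.1 σ₁.2.1
        (σ.2.2.1.trans σ₁.2.2.1.symm) hH hu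
    have heval (u : ℝ) : Continuous fun σ : stratumRays X e M => σ.1 u :=
      (continuous_apply u).comp continuous_induced_dom
    rw [hfiber]
    exact isClosed_biInter fun u _ =>
      isClosed_le ((heval u).dist continuous_const) continuous_const
  · rw [preimage_singleton_eq_empty.2 hy]
    exact isClosed_empty

lemma isClosed_of_forall_finite_inter_range_strMap (hX : GeodesicSpace X) {e : X}
    {S : Set (MorseBoundary e)} (h : ∀ M, (S ∩ range (strMap e M)).Finite) : IsClosed S := by
  refine isClosed_iSup_iff.2 fun M => isClosed_coinduced.2 ?_
  rw [← preimage_inter_range, ← biUnion_of_singleton (S ∩ range (strMap e M)),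
    preimage_iUnion₂]
  exact (h M).isClosed_biUnion fun y _ => isClosed_strMap_preimage_singleton hX e M y

end MorseRays
lemma exists_morseBoundAt_of_isCompact {X : Type*} [MetricSpace X] (hX : GeodesicSpace X)
    {e : X} {K : Set (MorseBoundary e)} (hK : IsCompact K) {k c : ℝ} (hk : 1 ≤ k)
    (hc : 0 ≤ c) : ∃ B, ∀ x ∈ K, MorseBoundAt (Quotient.out x).1 k c B := by
  by_contra! h
  choose xs hxsK hxs using fun j : ℕ => h j
  have hfin (M : ℝ → ℝ → ℝ) : {j | xs j ∈ range (strMap e M)}.Finite := by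
    refine (finite_Iio ⌈M k (c + 2 * (2 * M 3 0)) + 2 * (2 * M 3 0)⌉₊).subset fun j hj => ?_
    by_contra hge
    exact hxs j (((isMorseOn_out_of_mem_range_strMap hX hj).morseBoundAt hk hc).mono
      ((Nat.le_ceil _).trans (Nat.cast_le.2 (not_lt.1 hge))))
  have hclosed : ∀ S ⊆ range xs, IsClosed S := fun S hS =>
    isClosed_of_forall_finite_inter_range_strMap hX fun M => ((hfin M).image xs).subset
      fun y ⟨hyS, hyM⟩ => let ⟨j, hj⟩ := hS hyS; ⟨j, (hj.symm ▸ hyM :), hj⟩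
  have hA : (range xs).Finite :=
    IsCompact.finite_of_forall_subset_isClosed
      (hK.of_isClosed_subset (hclosed _ subset_rfl) (range_subset_iff.2 hxsK)) hclosed
  choose G hG using fun x : MorseBoundary e => (Quotient.out x).2.2.2
  have hcover : univ ⊆ ⋃ x ∈ range xs, {j | xs j ∈ range (strMap e (G x))} :=
    fun j _ => mem_biUnion (mem_range_self j)
      (mem_range_strMap_of_isMorseOn_out (hG (xs j)))
  exact infinite_univ ((hA.biUnion fun x _ => hfin (G x)).subset hcover)

theorem stmt9_general {X : Type*} [MetricSpace X] (hX : GeodesicSpace X) (e : X)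
    (K : Set (MorseBoundary e)) (hK : IsCompact K) :
    ∃ N : ℝ → ℝ → ℝ, K ⊆ Set.range (strMap e N) := by
  have hB : ∀ k c : ℝ, ∃ B, 1 ≤ k → 0 ≤ c → ∀ x ∈ K, MorseBoundAt (Quotient.out x).1 k c B := by
    intro k c
    by_cases hkc : 1 ≤ k ∧ 0 ≤ c
    · obtain ⟨B, hB⟩ := exists_morseBoundAt_of_isCompact hX hK hkc.1 hkc.2
      exact ⟨B, fun _ _ => hB⟩
    · exact ⟨0, fun hk hc => absurd ⟨hk, hc⟩ hkc⟩
  choose N hN using hB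
  exact ⟨N, fun x hx =>
    mem_range_strMap_of_isMorseOn_out fun k c hk hc => hN k c hk hc x hx⟩

/-- a nonempty compact subset of the Morse boundary of a proper geodesic
space lies in a single stratum: all its points are represented by N-Morse rays from e
for one gauge N. -/
theorem stmt9 {X : Type*} [MetricSpace X] [ProperSpace X] (hX : GeodesicSpace X) (e : X)
    (K : Set (MorseBoundary e)) (hne : K.Nonempty) (hK : IsCompact K) :
    ∃ N : ℝ → ℝ → ℝ, K ⊆ Set.range (strMap e N) :=
  stmt9_general hX e K hK
end
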